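/- arXiv:2307.11520 — 8 statements merged into one kernel-verified Lean document; each statement's English description precedes it below -/
import Mathlib

section
/- Let G be a graph with a leaf u whose support vertex v has degree 2. Then there exists a minimum isolating set of G containing neither u nor v. -/
open SimpleGraph Set

/-- The closed neighborhood `N[D]` of a set of vertices. -/
def closedNbhd {V : Type*} (G : SimpleGraph V) (D : Set V) : Set V :=
  {w | w ∈ D ∨ ∃ v ∈ D, G.Adj v w}

/-- `D` is an isolating set: the vertices outside `N[D]` form an independent set. -/
def IsIsolating {V : Type*} (G : SimpleGraph V) (D : Set V) : Prop :=
  ∀ a b : V, a ∉ closedNbhd G D → b ∉ closedNbhd G D → ¬ G.Adj a b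

/-- The isolation number: minimum cardinality of an isolating set. -/
noncomputable def isolNum {V : Type*} (G : SimpleGraph V) : ℕ :=
  sInf {k | ∃ D : Set V, IsIsolating G D ∧ D.ncard = k}

lemma isolating_univ {V : Type*} (G : SimpleGraph V) : IsIsolating G (Set.univ : Set V) := by
  intro a b ha _ _
  exact ha (Or.inl trivial)

lemma isolNum_le {V : Type*} (G : SimpleGraph V) {D : Set V}
    (h : IsIsolating G D) : isolNum G ≤ D.ncard :=
  Nat.sInf_le ⟨D, h, rfl⟩

lemma exists_min_isolating {V : Type*} (G : SimpleGraph V) :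
    ∃ D : Set V, IsIsolating G D ∧ D.ncard = isolNum G := by
  have hne : {k | ∃ D : Set V, IsIsolating G D ∧ D.ncard = k}.Nonempty :=
    ⟨(Set.univ : Set V).ncard, Set.univ, isolating_univ G, rfl⟩
  obtain ⟨D, hD, hcard⟩ := Nat.sInf_mem hne
  exact ⟨D, hD, hcard⟩

theorem stmt0 {V : Type*} [Fintype V] [DecidableEq V] (G : SimpleGraph V) [DecidableRel G.Adj]
    (u v : V) (huv : G.Adj u v) (hu : G.degree u = 1) (hv : G.degree v = 2) :
    ∃ D : Set V, IsIsolating G D ∧ D.ncard = isolNum G ∧ u ∉ D ∧ v ∉ D := by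
  obtain ⟨D, hD, hcard⟩ := exists_min_isolating G
  by_cases hin : u ∉ D ∧ v ∉ D
  · exact ⟨D, hD, hcard, hin.1, hin.2⟩
  -- u's only neighbor is v
  have hNu : ∀ x, G.Adj u x → x = v := by
    intro x hx
    obtain ⟨a, ha⟩ := Finset.card_eq_one.mp (hu :
      (G.neighborFinset u).card = 1)
    have hxa : x = a := by
      have := (G.mem_neighborFinset u x).mpr hx
      rw [ha] at this; simpa using this
    have hva : v = a := by
      have := (G.mem_neighborFinset u v).mpr huv
      rw [ha] at this; simpa using this
    rw [hxa, hva]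
  -- get the other neighbor w of v
  have hv2 : (G.neighborFinset v).card = 2 := hv
  obtain ⟨w, hw, hwu⟩ := Finset.exists_mem_ne (s := G.neighborFinset v)
    (by omega) u
  have hvw : G.Adj v w := (G.mem_neighborFinset v w).mp hw
  -- neighbors of v are exactly u and w
  have hNv : ∀ x, G.Adj v x → x = u ∨ x = w := by
    intro x hx
    have hsub : ({u, w} : Finset V) ⊆ G.neighborFinset v := by
      intro y hy
      rcases Finset.mem_insert.mp hy with h | h
      · rw [h]; exact (G.mem_neighborFinset v u).mpr huv.symm
      · rw [Finset.mem_singleton.mp h]; exact hw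
    have hcard2 : ({u, w} : Finset V).card = 2 := by
      rw [Finset.card_insert_of_notMem (by simpa using hwu.symm), Finset.card_singleton]
    have heq : ({u, w} : Finset V) = G.neighborFinset v :=
      Finset.eq_of_subset_of_card_le hsub (by omega)
    have : x ∈ ({u, w} : Finset V) := by
      rw [heq]; exact (G.mem_neighborFinset v x).mpr hx
    simpa using this
  have hwv : w ≠ v := fun h => G.irrefl (h ▸ hvw)
  set D' : Set V := insert w (D \ {u, v}) with hD'def
  have hwD' : w ∈ D' := Set.mem_insert _ _
  have hvmem : v ∈ closedNbhd G D' := Or.inr ⟨w, hwD', hvw.symm⟩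
  -- key: if x ∉ N[D'] and x ≠ u then x ∉ N[D]
  have hkey : ∀ x : V, x ∉ closedNbhd G D' → x ≠ u → x ∉ closedNbhd G D := by
    intro x hx hxu hxD
    have hxv : x ≠ v := fun h => hx (h ▸ hvmem)
    rcases hxD with hxD | ⟨d, hd, hdx⟩
    · exact hx (Or.inl (Or.inr ⟨hxD, by simp [hxu, hxv]⟩))
    · by_cases hdu : d = u
      · subst hdu
        exact hxv (hNu x hdx)
      · by_cases hdv : d = v
        · subst hdv
          rcases hNv x hdx with h | h
          · exact hxu h
          · exact hx (Or.inl (h ▸ hwD'))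
        · exact hx (Or.inr ⟨d, Or.inr ⟨hd, by simp [hdu, hdv]⟩, hdx⟩)
  have hD' : IsIsolating G D' := by
    intro a b ha hb hab
    have hav : a ≠ v := fun h => ha (h ▸ hvmem)
    have hbv : b ≠ v := fun h => hb (h ▸ hvmem)
    have hau : a ≠ u := by
      intro h; subst h; exact hbv (hNu b hab)
    have hbu : b ≠ u := by
      intro h; subst h; exact hav (hNu a hab.symm)
    exact hD a b (hkey a ha hau) (hkey b hb hbu) hab
  -- cardinality
  have hfin : D.Finite := Set.toFinite D
  have hssub : D \ {u, v} ⊂ D := by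
    rw [Set.ssubset_iff_of_subset Set.diff_subset]
    rcases not_and_or.mp hin with h | h
    · exact ⟨u, not_not.mp h, fun hc => hc.2 (by simp)⟩
    · exact ⟨v, not_not.mp h, fun hc => hc.2 (by simp)⟩
  have hlt : (D \ {u, v}).ncard < D.ncard := Set.ncard_lt_ncard hssub hfin
  have hle : D'.ncard ≤ D.ncard := by
    calc D'.ncard ≤ (D \ {u, v}).ncard + 1 := Set.ncard_insert_le _ _
    _ ≤ D.ncard := by omega
  have hcard' : D'.ncard = isolNum G :=
    le_antisymm (hcard ▸ hle) (isolNum_le G hD')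
  refine ⟨D', hD', hcard', ?_, ?_⟩
  · rintro (h | h)
    · exact hwu h.symm
    · exact h.2 (by simp)
  · rintro (h | h)
    · exact hwv h.symm
    · exact h.2 (by simp)
end

section
/- If e is an edge of a graph G and D is an isolating set of G − e such that at least one endpoint of e belongs to N[D], then D is an isolating set of G. -/
open SimpleGraph Set

theorem stmt1 {V : Type*} (G : SimpleGraph V) (x y : V) (hxy : G.Adj x y) (D : Set V)
    (hD : IsIsolating (G.deleteEdges {s(x, y)}) D)
    (hend : x ∈ closedNbhd (G.deleteEdges {s(x, y)}) D ∨
      y ∈ closedNbhd (G.deleteEdges {s(x, y)}) D) :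
    IsIsolating G D := by
  intro a b ha hb hab
  have hmono : closedNbhd (G.deleteEdges {s(x, y)}) D ⊆ closedNbhd G D := by
    intro w hw
    rcases hw with h | ⟨v, hv, hadj⟩
    · exact Or.inl h
    · exact Or.inr ⟨v, hv, hadj.1⟩
  have ha' : a ∉ closedNbhd (G.deleteEdges {s(x, y)}) D := fun h => ha (hmono h)
  have hb' : b ∉ closedNbhd (G.deleteEdges {s(x, y)}) D := fun h => hb (hmono h)
  have hne : ¬ (G.deleteEdges {s(x, y)}).Adj a b := hD a b ha' hb'
  rw [deleteEdges_adj] at hne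
  have heq : s(a, b) = s(x, y) := by
    by_contra h
    exact hne ⟨hab, by simpa using h⟩
  rw [Sym2.eq_iff] at heq
  rcases hend with hx | hy <;> rcases heq with ⟨h1, h2⟩ | ⟨h1, h2⟩ <;>
    subst h1 <;> subst h2
  · exact ha' hx
  · exact hb' hx
  · exact hb' hy
  · exact ha' hy
end

section
/- Let G be a unicyclic graph whose order is a multiple of 3, with unique cycle C. For each vertex u of C, let T(u) denote the hanging tree of u (the component containing u after removing the edges of C incident with u). Then there exists a set X of at most three consecutive vertices of C such that the total number of vertices in the union of the trees T(u), u ∈ X, is a multiple of 3. -/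
open SimpleGraph Set

/-- The order of the hanging tree of the cycle vertex `c i`: the size of the connected
component of `c i` after deleting the two cycle edges incident with `c i`. -/
noncomputable def hangTreeOrder {V : Type*} (G : SimpleGraph V) {m : ℕ} (c : ZMod m → V)
    (i : ZMod m) : ℕ :=
  ((G.deleteEdges {s(c i, c (i + 1)), s(c i, c (i - 1))}).connectedComponentMk (c i)).supp.ncard

theorem stmt3 {V : Type*} [Fintype V] [DecidableEq V] (G : SimpleGraph V) [DecidableRel G.Adj]
    (hconn : G.Connected) (hunicyclic : G.edgeFinset.card = Fintype.card V)
    (m : ℕ) (hm : 3 ≤ m) (c : ZMod m → V) (hinj : Function.Injective c)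
    (hadj : ∀ i : ZMod m, G.Adj (c i) (c (i + 1)))
    (hmod : Fintype.card V % 3 = 0) :
    ∃ (i : ZMod m) (r : ℕ), r ∈ ({1, 2, 3} : Set ℕ) ∧
      3 ∣ ∑ j ∈ Finset.range r, hangTreeOrder G c (i + (j : ZMod m)) := by
  haveI : NeZero m := ⟨by omega⟩
  set t : ZMod m → ℕ := hangTreeOrder G c with ht
  by_cases h0 : ∃ i, t i % 3 = 0
  · obtain ⟨i, hi⟩ := h0
    refine ⟨i, 1, by simp, ?_⟩
    simp only [Finset.sum_range_one, Nat.cast_zero, add_zero]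
    omega
  · push_neg at h0
    by_cases h1 : ∃ i, t i % 3 ≠ t (i + 1) % 3
    · obtain ⟨i, hi⟩ := h1
      refine ⟨i, 2, by simp, ?_⟩
      rw [Finset.sum_range_succ, Finset.sum_range_one]
      simp only [Nat.cast_zero, add_zero, Nat.cast_one]
      have h2 := t i |>.mod_lt (y := 3) (by omega)
      have h3 := (t (i + 1)).mod_lt (y := 3) (by omega)
      have h4 := h0 i
      have h5 := h0 (i + 1)
      omega
    · push_neg at h1
      refine ⟨0, 3, by simp, ?_⟩
      rw [Finset.sum_range_succ, Finset.sum_range_succ, Finset.sum_range_one]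
      simp only [Nat.cast_zero, add_zero, Nat.cast_one, Nat.cast_ofNat]
      have e1 := h1 0
      have e2 := h1 (0 + 1)
      have e3 : (0 : ZMod m) + 1 + 1 = 0 + 2 := by ring
      rw [e3] at e2
      have h2 := (t 0).mod_lt (y := 3) (by omega)
      have h4 := h0 0
      omega
end

section
/- If G is a block graph different from a complete graph, then G has a minimum isolating set containing no simplicial vertices. -/
open SimpleGraph Set

/-- `v` is a cut vertex of `G`. -/
def IsCutVertex {V : Type*} (G : SimpleGraph V) (v : V) : Prop :=
  G.Connected ∧ ¬ (G.induce {w | w ≠ v}).Connected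

/-- `B` is a block of `G`: a maximal connected set of vertices inducing a subgraph
without cut vertices. -/
def IsBlock {V : Type*} (G : SimpleGraph V) (B : Set V) : Prop :=
  (G.induce B).Connected ∧ (∀ v, ¬ IsCutVertex (G.induce B) v) ∧
    ∀ B' : Set V, B ⊆ B' → (G.induce B').Connected →
      (∀ v, ¬ IsCutVertex (G.induce B') v) → B' = B

/-- A block graph: a connected graph all of whose blocks are complete. -/
def IsBlockGraph {V : Type*} (G : SimpleGraph V) : Prop :=
  G.Connected ∧ ∀ B : Set V, IsBlock G B → ∀ x ∈ B, ∀ y ∈ B, x ≠ y → G.Adj x y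

/-- `v` is simplicial: its closed neighborhood induces a complete graph. -/
def Simplicial {V : Type*} (G : SimpleGraph V) (v : V) : Prop :=
  ∀ x ∈ G.neighborSet v, ∀ y ∈ G.neighborSet v, x ≠ y → G.Adj x y

/-- An end-block: a block containing at most one cut vertex of `G`. -/
def IsEndBlock {V : Type*} (G : SimpleGraph V) (B : Set V) : Prop :=
  IsBlock G B ∧ {v ∈ B | IsCutVertex G v}.Subsingleton


lemma cross_edge {V : Type*} (G : SimpleGraph V) (S : Set V) :
    ∀ {a b : V} (_ : G.Walk a b), a ∈ S → b ∉ S → ∃ c ∈ S, ∃ d, d ∉ S ∧ G.Adj c d := by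
  intro a b w
  induction w with
  | nil => intro ha hb; exact absurd ha hb
  | @cons u x b h p ih =>
    intro ha hb
    by_cases hx : x ∈ S
    · exact ih hx hb
    · exact ⟨u, ha, x, hx, h⟩

lemma key_lemma {V : Type*} (G : SimpleGraph V) (hc : G.Connected) (hne : G ≠ ⊤)
    (v : V) (hv : Simplicial G v) :
    ∃ c, ¬ Simplicial G c ∧ ∀ x, (x = v ∨ G.Adj v x) → (x = c ∨ G.Adj c x) := by
  have hU : ∃ u, ¬ (u = v ∨ G.Adj v u) := by
    by_contra h
    push_neg at h
    apply hne
    ext a b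
    simp only [SimpleGraph.top_adj]
    constructor
    · exact fun h' => h'.ne
    · intro hab
      rcases h a with ha | ha
      · subst ha
        rcases h b with hb | hb
        · exact absurd hb.symm hab
        · exact hb
      · rcases h b with hb | hb
        · subst hb; exact ha.symm
        · exact hv a ha b hb hab
  obtain ⟨u, hu⟩ := hU
  obtain ⟨w⟩ := hc.preconnected v u
  obtain ⟨c, hcS, d, hdS, hcd⟩ :=
    cross_edge G {x | x = v ∨ G.Adj v x} w (Or.inl rfl) hu
  have hcv : G.Adj v c := by
    rcases hcS with h | h
    · subst h; exact absurd (Or.inr hcd) hdS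
    · exact h
  have hvd : v ≠ d := by
    intro h; exact hdS (Or.inl h.symm)
  refine ⟨c, ?_, ?_⟩
  · intro hsimp
    exact hdS (Or.inr (hsimp v hcv.symm d hcd hvd))
  · rintro x (rfl | hx)
    · exact Or.inr hcv.symm
    · by_cases hxc : x = c
      · exact Or.inl hxc
      · exact Or.inr (hv x hx c hcv hxc).symm

theorem stmt4 {V : Type*} [Fintype V] (G : SimpleGraph V)
    (hbg : IsBlockGraph G) (hne : G ≠ ⊤) :
    ∃ D : Set V, IsIsolating G D ∧ D.ncard = isolNum G ∧ ∀ v ∈ D, ¬ Simplicial G v := by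
  classical
  have hc := hbg.1
  have hmem : isolNum G ∈ {k | ∃ D : Set V, IsIsolating G D ∧ D.ncard = k} := by
    apply Nat.sInf_mem
    exact ⟨(Set.univ : Set V).ncard, Set.univ,
      fun a b ha _ _ => ha (Or.inl (Set.mem_univ a)), rfl⟩
  obtain ⟨D, hD, hcard⟩ := hmem
  let g : V → V := fun v => if h : Simplicial G v then (key_lemma G hc hne v h).choose else v
  have hg1 : ∀ v, ¬ Simplicial G (g v) := by
    intro v
    by_cases h : Simplicial G v
    · simp only [g, dif_pos h]; exact (key_lemma G hc hne v h).choose_spec.1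
    · simp only [g, dif_neg h]; exact h
  have hg2 : ∀ v x, (x = v ∨ G.Adj v x) → (x = g v ∨ G.Adj (g v) x) := by
    intro v x hx
    by_cases h : Simplicial G v
    · simp only [g, dif_pos h]; exact (key_lemma G hc hne v h).choose_spec.2 x hx
    · simp only [g, dif_neg h]; exact hx
  have hsub : closedNbhd G D ⊆ closedNbhd G (g '' D) := by
    rintro w (hw | ⟨u, hu, hadj⟩)
    · rcases hg2 w w (Or.inl rfl) with h | h
      · exact Or.inl ⟨w, hw, h.symm⟩
      · exact Or.inr ⟨g w, ⟨w, hw, rfl⟩, h⟩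
    · rcases hg2 u w (Or.inr hadj) with h | h
      · exact Or.inl ⟨u, hu, h.symm⟩
      · exact Or.inr ⟨g u, ⟨u, hu, rfl⟩, h⟩
  have hiso : IsIsolating G (g '' D) :=
    fun a b ha hb => hD a b (fun h => ha (hsub h)) (fun h => hb (hsub h))
  refine ⟨g '' D, hiso, ?_, ?_⟩
  · refine le_antisymm ?_ ?_
    · calc (g '' D).ncard ≤ D.ncard := Set.ncard_image_le (Set.toFinite D)
        _ = isolNum G := hcard
    · exact Nat.sInf_le ⟨g '' D, hiso, rfl⟩
  · rintro x ⟨u, _, rfl⟩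
    exact hg1 u
end

section
/- Let G be a block graph of order n that is not a complete graph. If ι(G) = n/3, then every block of G contains at most two simplicial vertices. -/
open SimpleGraph Set

/-!
Connected vertex sets `S` with `|S| ≥ 3` of a block graph satisfy `3 ι(S) ≤ |S|`, by induction on
`|S|`: remove a cut vertex `v`, or the closed neighbourhood of a non-cut vertex `v` (a clique,
since `G` is a block graph), put `v` into the isolating set and isolate the remaining components
separately; components with one or two vertices are handled by the removed clique. The induction
needs a strengthening: when `3 ι(S) = |S|`, every vertex of `S` lies in a minimum isolating set.
This lets a tight component hanging at a cut vertex `v` dominate `v` by itself.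

For the theorem, let a block `B` contain three simplicial vertices. Neighbours of a simplicial
vertex of `B` stay in `B`, so each component of `G - B` hangs off one of the other `|B| - 3`
vertices of `B`. Dominating `B` by a single vertex, or by one attachment vertex per two-vertex
component, and isolating the larger components within a third of their size produces an
isolating set with fewer than `n / 3` vertices.
-/

namespace BlockGraph

variable {V : Type*} {G : SimpleGraph V}

/-! ### Connectivity inside a vertex set -/

variable (G) in
def ReachableIn (S : Set V) (a b : V) : Prop :=
  ∃ w : G.Walk a b, ∀ x ∈ w.support, x ∈ S

variable (G) in
def ConnectedIn (S : Set V) : Prop :=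
  S.Nonempty ∧ ∀ a ∈ S, ∀ b ∈ S, ReachableIn G S a b

namespace ReachableIn

variable {S T : Set V} {a b c : V}

lemma right_mem (h : ReachableIn G S a b) : b ∈ S := by
  obtain ⟨w, hw⟩ := h
  exact hw b w.end_mem_support

lemma refl (ha : a ∈ S) : ReachableIn G S a a :=
  ⟨.nil, by simpa using ha⟩

lemma symm (h : ReachableIn G S a b) : ReachableIn G S b a := by
  obtain ⟨w, hw⟩ := h
  exact ⟨w.reverse, by simpa using hw⟩

lemma trans (h : ReachableIn G S a b) (h' : ReachableIn G S b c) : ReachableIn G S a c := by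
  obtain ⟨w, hw⟩ := h
  obtain ⟨w', hw'⟩ := h'
  refine ⟨w.append w', fun x hx => ?_⟩
  rw [Walk.mem_support_append_iff] at hx
  rcases hx with hx | hx
  exacts [hw x hx, hw' x hx]

lemma of_adj (ha : a ∈ S) (hb : b ∈ S) (h : G.Adj a b) : ReachableIn G S a b :=
  ⟨.cons h .nil, by simp [ha, hb]⟩

lemma mono (hST : S ⊆ T) (h : ReachableIn G S a b) : ReachableIn G T a b := by
  obtain ⟨w, hw⟩ := h
  exact ⟨w, fun x hx => hST (hw x hx)⟩

end ReachableIn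

lemma reachableIn_iff_reachable_induce {S : Set V} {a b : S} :
    ReachableIn G S a b ↔ (G.induce S).Reachable a b := by
  constructor
  · rintro ⟨w, hw⟩
    exact ⟨w.induce S hw⟩
  · rintro ⟨w⟩
    refine ⟨w.map (Embedding.induce S).toHom, fun x hx => ?_⟩
    obtain ⟨y, -, rfl⟩ := List.mem_map.mp ((w.support_map _) ▸ hx)
    exact y.2

lemma connectedIn_iff_connected_induce {S : Set V} : ConnectedIn G S ↔ (G.induce S).Connected := by
  rw [connected_iff, Set.nonempty_coe_sort, and_comm]
  simp [ConnectedIn, Preconnected, ← reachableIn_iff_reachable_induce]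

lemma connectedIn_univ (h : G.Connected) : ConnectedIn G Set.univ := by
  rw [connectedIn_iff_connected_induce]
  exact (induceUnivIso G).symm.connected_iff.mp h

lemma ConnectedIn.of_forall_reachableIn {S : Set V} {c : V} (hc : c ∈ S)
    (h : ∀ x ∈ S, ReachableIn G S x c) : ConnectedIn G S :=
  ⟨⟨c, hc⟩, fun a ha b hb => (h a ha).trans (h b hb).symm⟩

lemma connectedIn_of_pairwise {S : Set V} (hne : S.Nonempty) (h : S.Pairwise G.Adj) :
    ConnectedIn G S := by
  obtain ⟨c, hc⟩ := hne
  refine .of_forall_reachableIn hc fun x hx => ?_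
  rcases eq_or_ne x c with rfl | hxc
  exacts [.refl hx, .of_adj hx hc (h hx hc hxc)]

variable (G) in
def componentIn (R : Set V) (a : V) : Set V := {b ∈ R | ReachableIn G R a b}

section Components

variable {R : Set V} {a b c : V}

lemma componentIn_subset : componentIn G R a ⊆ R := fun _ h => h.1

lemma mem_componentIn_self (ha : a ∈ R) : a ∈ componentIn G R a :=
  ⟨ha, .refl ha⟩

lemma componentIn_eq_of_mem (hb : b ∈ componentIn G R a) : componentIn G R b = componentIn G R a :=
  Set.ext fun _ => ⟨fun hx => ⟨hx.1, hb.2.trans hx.2⟩, fun hx => ⟨hx.1, hb.2.symm.trans hx.2⟩⟩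

lemma mem_componentIn_of_adj (hb : b ∈ componentIn G R a) (hc : c ∈ R) (h : G.Adj b c) :
    c ∈ componentIn G R a :=
  ⟨hc, hb.2.trans (.of_adj hb.1 hc h)⟩

lemma reachableIn_componentIn (hb : b ∈ componentIn G R a) :
    ReachableIn G (componentIn G R a) b a := by
  classical
  obtain ⟨w, hw⟩ := hb.2
  refine ⟨w.reverse, fun x hx => ⟨hw x (by simpa using hx), ?_⟩⟩
  have hx' : x ∈ w.support := by simpa using hx
  exact ⟨w.takeUntil x hx', fun y hy => hw y (w.support_takeUntil_subset_support hx' hy)⟩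

lemma connectedIn_componentIn (ha : a ∈ R) : ConnectedIn G (componentIn G R a) :=
  .of_forall_reachableIn (mem_componentIn_self ha) fun _ hx => reachableIn_componentIn hx

end Components

section Finite

variable [Finite V]

variable (G) in
noncomputable def components (R : Set V) : Finset (Set V) := by
  classical exact R.toFinite.toFinset.image (componentIn G R)

variable (G) in
noncomputable def bigComponents (R : Set V) : Finset (Set V) :=
  (components G R).filter fun C => 3 ≤ C.ncard

variable (G) in
noncomputable def pairComponents (R : Set V) : Finset (Set V) :=
  (components G R).filter fun C => C.ncard = 2

variable {R C : Set V}

lemma mem_components : C ∈ components G R ↔ ∃ a ∈ R, componentIn G R a = C := by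
  classical
  simp [components]

lemma nonempty_of_mem_components (hC : C ∈ components G R) : C.Nonempty := by
  obtain ⟨a, ha, rfl⟩ := mem_components.mp hC
  exact ⟨a, mem_componentIn_self ha⟩

lemma subset_of_mem_components (hC : C ∈ components G R) : C ⊆ R := by
  obtain ⟨a, -, rfl⟩ := mem_components.mp hC
  exact componentIn_subset

lemma connectedIn_of_mem_components (hC : C ∈ components G R) : ConnectedIn G C := by
  obtain ⟨a, ha, rfl⟩ := mem_components.mp hC
  exact connectedIn_componentIn ha

lemma eq_componentIn_of_mem_components (hC : C ∈ components G R) {x : V} (hx : x ∈ C) :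
    C = componentIn G R x := by
  obtain ⟨a, -, rfl⟩ := mem_components.mp hC
  exact (componentIn_eq_of_mem hx).symm

lemma exists_adj_of_mem_components {S K : Set V} (hS : ConnectedIn G S)
    (hK : (K ∩ S).Nonempty) (hC : C ∈ components G (S \ K)) :
    ∃ q ∈ K ∩ S, ∃ z ∈ C, G.Adj q z := by
  obtain ⟨c, hc, rfl⟩ := mem_components.mp hC
  obtain ⟨k, hkK, hkS⟩ := hK
  obtain ⟨w, hw⟩ := hS.2 c hc.1 k hkS
  have hk : k ∉ componentIn G (S \ K) c := fun h => h.1.2 hkK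
  obtain ⟨d, hd, hd₁, hd₂⟩ := w.exists_boundary_dart _ (mem_componentIn_self hc) hk
  have hd₂S : d.snd ∈ S := hw _ (w.dart_snd_mem_support_of_mem_darts hd)
  have hd₂K : d.snd ∈ K := by
    by_contra h
    exact hd₂ (mem_componentIn_of_adj hd₁ ⟨hd₂S, h⟩ d.adj)
  exact ⟨d.snd, ⟨hd₂K, hd₂S⟩, d.fst, hd₁, d.adj.symm⟩

lemma ssubset_of_mem_components {S K : Set V} (hK : (K ∩ S).Nonempty)
    (hC : C ∈ components G (S \ K)) : C ⊂ S := by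
  obtain ⟨k, hkK, hkS⟩ := hK
  refine ⟨(subset_of_mem_components hC).trans Set.sdiff_subset, fun h => ?_⟩
  exact (subset_of_mem_components hC (h hkS)).2 hkK

lemma ncard_eq_sum_components : R.ncard = ∑ C ∈ components G R, C.ncard := by
  classical
  have hR : R = ⋃ C ∈ (↑(components G R) : Set (Set V)), id C := by
    ext x
    simp only [Set.mem_iUnion, Finset.mem_coe, id, exists_prop]
    refine ⟨fun hx => ⟨_, mem_components.mpr ⟨x, hx, rfl⟩, mem_componentIn_self hx⟩, ?_⟩
    rintro ⟨C, hC, hx⟩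
    exact subset_of_mem_components hC hx
  have hdisj : (↑(components G R) : Set (Set V)).PairwiseDisjoint id := by
    intro C hC C' hC' hne
    refine Set.disjoint_left.mpr fun x hx hx' => hne ?_
    rw [eq_componentIn_of_mem_components hC hx, eq_componentIn_of_mem_components hC' hx']
  conv_lhs => rw [hR]
  rw [Set.Finite.ncard_biUnion (Finset.finite_toSet _) (fun _ _ => Set.toFinite _) hdisj,
    finsum_mem_coe_finset]
  rfl

lemma one_lt_card_components (hne : R.Nonempty) (hR : ¬ ConnectedIn G R) :
    1 < (components G R).card := by
  obtain ⟨a, ha, b, hb, hab⟩ : ∃ a ∈ R, ∃ b ∈ R, ¬ ReachableIn G R a b := by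
    by_contra! h
    exact hR ⟨hne, h⟩
  refine Finset.one_lt_card.mpr ⟨_, mem_components.mpr ⟨a, ha, rfl⟩, _,
    mem_components.mpr ⟨b, hb, rfl⟩, fun h => hab ?_⟩
  exact (h ▸ mem_componentIn_self hb : b ∈ componentIn G R a).2

end Finite

/-! ### Blocks of a block graph -/

variable (G) in
def NoCutVertexIn (S : Set V) : Prop :=
  ConnectedIn G S ∧ ∀ v ∈ S, ConnectedIn G (S \ {v})

lemma connected_induce_induce_iff {B : Set V} {T : Set B} :
    ((G.induce B).induce T).Connected ↔ (G.induce (Subtype.val '' T)).Connected := by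
  let f := (Embedding.induce (G := G) B).comp (Embedding.induce (G := G.induce B) T)
  have hf : Set.range f = Subtype.val '' T := by
    ext x
    constructor
    · rintro ⟨y, rfl⟩
      exact ⟨y.1, y.2, rfl⟩
    · rintro ⟨y, hy, rfl⟩
      exact ⟨⟨y, hy⟩, rfl⟩
  rw [(Embedding.isoInduceRange f).connected_iff, hf]

lemma noCutVertexIn_iff {B : Set V} :
    NoCutVertexIn G B ↔ (G.induce B).Connected ∧ ∀ v, ¬ IsCutVertex (G.induce B) v := by
  have hdel (v : B) : ((G.induce B).induce {w | w ≠ v}).Connected ↔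
      ConnectedIn G (B \ {v.1}) := by
    have himage : Subtype.val '' {w : B | w ≠ v} = B \ {v.1} := by
      ext x
      simp [Subtype.ext_iff, and_comm]
    rw [connected_induce_induce_iff, connectedIn_iff_connected_induce, himage]
  simp only [NoCutVertexIn, IsCutVertex, connectedIn_iff_connected_induce, not_and, not_not,
    Subtype.forall, hdel]
  tauto

lemma isBlock_iff {B : Set V} :
    IsBlock G B ↔ NoCutVertexIn G B ∧ ∀ B', B ⊆ B' → NoCutVertexIn G B' → B' = B := by
  simp only [IsBlock, noCutVertexIn_iff]
  tauto

lemma noCutVertexIn_of_pairwise {S : Set V} (hS : S.Nontrivial) (h : S.Pairwise G.Adj) :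
    NoCutVertexIn G S := by
  refine ⟨connectedIn_of_pairwise hS.nonempty h, fun v _ => ?_⟩
  obtain ⟨w, hw, hwv⟩ := hS.exists_ne v
  exact connectedIn_of_pairwise ⟨w, hw, hwv⟩ (h.mono Set.sdiff_subset)

lemma _root_.IsBlockGraph.pairwise_adj [Finite V] (hbg : IsBlockGraph G) {S : Set V}
    (hS : NoCutVertexIn G S) : S.Pairwise G.Adj := by
  obtain ⟨B, hSB, hB⟩ :=
    (Set.toFinite {T : Set V | NoCutVertexIn G T}).exists_le_maximal (a := S) hS
  have hblock : IsBlock G B :=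
    isBlock_iff.mpr ⟨hB.1, fun B' hBB' hB' => (hB.2 hB' hBB').antisymm hBB'⟩
  exact fun a ha b hb hab => hbg.2 B hblock a (hSB ha) b (hSB hb) hab

lemma eq_of_mem_takeUntil_of_mem_dropUntil [DecidableEq V] {u w y c : V} {p : G.Walk u w}
    (hp : p.IsPath) (hy : y ∈ p.support) (h₁ : c ∈ (p.takeUntil y hy).support)
    (h₂ : c ∈ (p.dropUntil y hy).support) : c = y := by
  have hnd := hp.support_nodup
  rw [← p.take_spec hy, Walk.support_append] at hnd
  rw [← Walk.cons_tail_support, List.mem_cons] at h₂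
  exact h₂.resolve_right fun h => List.disjoint_of_nodup_append hnd h₁ h

lemma reachableIn_support_of_isPath [DecidableEq V] {u w c y : V} {p : G.Walk u w}
    (hp : p.IsPath) (hy : y ∈ p.support) (hyc : y ≠ c) :
    ReachableIn G ({x | x ∈ p.support} \ {c}) y u ∨
      ReachableIn G ({x | x ∈ p.support} \ {c}) y w := by
  by_cases hc : c ∈ (p.takeUntil y hy).support
  · refine .inr ⟨p.dropUntil y hy, fun x hx => ⟨p.support_dropUntil_subset_support hy hx, ?_⟩⟩
    rintro rfl
    exact hyc (eq_of_mem_takeUntil_of_mem_dropUntil hp hy hc hx).symm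
  · refine .inl ⟨(p.takeUntil y hy).reverse, fun x hx => ?_⟩
    rw [Walk.support_reverse, List.mem_reverse] at hx
    exact ⟨p.support_takeUntil_subset_support hy hx, by rintro rfl; exact hc hx⟩

lemma reachableIn_support_start [DecidableEq V] {u w y : V} (p : G.Walk u w)
    (hy : y ∈ p.support) : ReachableIn G {x | x ∈ p.support} y u := by
  refine ⟨(p.takeUntil y hy).reverse, fun x hx => ?_⟩
  rw [Walk.support_reverse, List.mem_reverse] at hx
  exact p.support_takeUntil_subset_support hy hx

lemma noCutVertexIn_insert_support {u w v : V} {p : G.Walk u w} (hp : p.IsPath)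
    (hv : v ∉ p.support) (hvu : G.Adj v u) (hvw : G.Adj v w) :
    NoCutVertexIn G (insert v {x | x ∈ p.support}) := by
  classical
  set P : Set V := {x | x ∈ p.support}
  have hvP : v ∈ insert v P := Set.mem_insert v P
  have hP : P ⊆ insert v P := Set.subset_insert v P
  refine ⟨.of_forall_reachableIn hvP fun x hx => ?_, fun c hc => ?_⟩
  · rcases hx with rfl | hx
    · exact .refl hvP
    · exact ((reachableIn_support_start p hx).mono hP).trans
        (.of_adj (hP p.start_mem_support) hvP hvu.symm)
  rcases hc with rfl | hc
  · have hcP : insert c P \ {c} = P := Set.insert_sdiff_self_of_notMem hv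
    rw [hcP]
    exact .of_forall_reachableIn p.start_mem_support fun y hy => reachableIn_support_start p hy
  have hvc : v ∈ insert v P \ {c} := ⟨hvP, by rintro rfl; exact hv hc⟩
  have hPc : P \ {c} ⊆ insert v P \ {c} := Set.sdiff_subset_sdiff_left hP
  refine .of_forall_reachableIn hvc fun y ⟨hy, hyc⟩ => ?_
  rcases hy with rfl | hy
  · exact .refl hvc
  rcases reachableIn_support_of_isPath hp hy hyc with h | h
  · exact (h.mono hPc).trans (.of_adj (hPc h.right_mem) hvc hvu.symm)
  · exact (h.mono hPc).trans (.of_adj (hPc h.right_mem) hvc hvw.symm)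

lemma _root_.IsBlockGraph.adj_of_connectedIn_diff [Finite V] (hbg : IsBlockGraph G) {S : Set V}
    {v u w : V} (hS : ConnectedIn G (S \ {v})) (hu : u ∈ S) (hw : w ∈ S) (hvu : G.Adj v u)
    (hvw : G.Adj v w) (huw : u ≠ w) : G.Adj u w := by
  classical
  obtain ⟨q, hq⟩ := hS.2 u ⟨hu, hvu.ne'⟩ w ⟨hw, hvw.ne'⟩
  have hv : v ∉ q.bypass.support := fun h => (hq v (q.support_bypass_subset_support h)).2 rfl
  have hclique := hbg.pairwise_adj (noCutVertexIn_insert_support q.bypass_isPath hv hvu hvw)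
  exact hclique (Set.mem_insert_of_mem _ q.bypass.start_mem_support)
    (Set.mem_insert_of_mem _ q.bypass.end_mem_support) huw

lemma _root_.IsBlock.mem_of_adj_of_simplicial {B : Set V} (hB : IsBlock G B) (hK : B.Pairwise G.Adj)
    {s t : V} (hs : s ∈ B) (hsimp : Simplicial G s) (hst : G.Adj s t) : t ∈ B := by
  by_contra ht
  have : Std.Symm G.Adj := ⟨fun _ _ h => h.symm⟩
  have hclique : (insert t B).Pairwise G.Adj := by
    refine (Set.pairwise_insert_of_symm_of_notMem ht).mpr ⟨hK, fun b hb => ?_⟩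
    rcases eq_or_ne b s with rfl | hbs
    · exact hst.symm
    · exact hsimp t hst b (hK hs hb hbs.symm) (by rintro rfl; exact ht hb)
  have hnt : (insert t B).Nontrivial :=
    ⟨t, Set.mem_insert t B, s, Set.mem_insert_of_mem t hs, hst.ne'⟩
  have heq :=
    (isBlock_iff.mp hB).2 _ (Set.subset_insert t B) (noCutVertexIn_of_pairwise hnt hclique)
  exact ht (heq ▸ Set.mem_insert t B)

/-! ### Isolation inside a vertex set -/

variable (G) in
def IsIsolatingIn (S D : Set V) : Prop :=
  D ⊆ S ∧ ∀ a ∈ S, ∀ b ∈ S, a ∉ closedNbhd G D → b ∉ closedNbhd G D → ¬ G.Adj a b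

variable (G) in
noncomputable def isolNumIn (S : Set V) : ℕ :=
  sInf {k | ∃ D, IsIsolatingIn G S D ∧ D.ncard = k}

lemma isIsolatingIn_univ_iff {D : Set V} : IsIsolatingIn G Set.univ D ↔ IsIsolating G D :=
  ⟨fun h a b ha hb => h.2 a trivial b trivial ha hb,
    fun h => ⟨Set.subset_univ D, fun a _ b _ ha hb => h a b ha hb⟩⟩

lemma isolNum_le {D : Set V} (h : IsIsolating G D) : isolNum G ≤ D.ncard :=
  Nat.sInf_le ⟨D, h, rfl⟩

lemma isolNumIn_le {S D : Set V} (h : IsIsolatingIn G S D) : isolNumIn G S ≤ D.ncard :=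
  Nat.sInf_le ⟨D, h, rfl⟩

lemma exists_isIsolatingIn_ncard_eq (S : Set V) :
    ∃ D, IsIsolatingIn G S D ∧ D.ncard = isolNumIn G S := by
  have hS : IsIsolatingIn G S S := ⟨subset_rfl, fun a ha _ _ haS => absurd (Or.inl ha) haS⟩
  exact Nat.sInf_mem (s := {k | ∃ D, IsIsolatingIn G S D ∧ D.ncard = k}) ⟨_, S, hS, rfl⟩

lemma mem_closedNbhd_of_mem {D : Set V} {d : V} (hd : d ∈ D) : d ∈ closedNbhd G D :=
  Or.inl hd

lemma mem_closedNbhd_of_adj {D : Set V} {d w : V} (hd : d ∈ D) (h : G.Adj d w) :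
    w ∈ closedNbhd G D :=
  Or.inr ⟨d, hd, h⟩

lemma closedNbhd_mono {D E : Set V} (h : D ⊆ E) : closedNbhd G D ⊆ closedNbhd G E := by
  rintro x (hx | ⟨d, hd, hadj⟩)
  exacts [Or.inl (h hx), Or.inr ⟨d, h hd, hadj⟩]

lemma exists_isIsolatingIn_forall_mem (F : Finset (Set V)) :
    ∃ U ⊆ ⋃ C ∈ F, C, U.ncard ≤ ∑ C ∈ F, isolNumIn G C ∧
      ∀ C ∈ F, ∃ D ⊆ U, IsIsolatingIn G C D := by
  choose f hf using exists_isIsolatingIn_ncard_eq (G := G)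
  refine ⟨⋃ C ∈ F, f C, Set.biUnion_mono subset_rfl fun C _ => (hf C).1.1, ?_,
    fun C hC => ⟨f C, Set.subset_biUnion_of_mem (u := f) hC, (hf C).1⟩⟩
  exact (F.set_ncard_biUnion_le f).trans_eq (Finset.sum_congr rfl fun C _ => (hf C).2)

lemma exists_subset_adj_of_forall {P : Set V} {F : Finset (Set V)}
    (h : ∀ C ∈ F, ∃ q ∈ P, ∃ z ∈ C, G.Adj q z) :
    ∃ X ⊆ P, X.ncard ≤ F.card ∧ ∀ C ∈ F, ∃ q ∈ X, ∃ z ∈ C, G.Adj q z := by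
  classical
  choose q hqP hq using h
  refine ⟨↑(F.attach.image fun C => q C.1 C.2), ?_, ?_, fun C hC => ⟨q C hC, ?_, hq C hC⟩⟩
  · intro x hx
    obtain ⟨C, -, rfl⟩ := Finset.mem_image.mp hx
    exact hqP C.1 C.2
  · rw [Set.ncard_coe_finset]
    exact Finset.card_image_le.trans F.card_attach.le
  · exact Finset.mem_image.mpr ⟨⟨C, hC⟩, F.mem_attach _, rfl⟩

section Finite

variable [Finite V]

/-- Once `E` dominates `K`, only edges inside the components of `S \ K` matter, and a
two-vertex component is harmless as soon as one of its vertices is dominated. -/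
lemma isIsolatingIn_of_components {S K E : Set V} (hES : E ⊆ S)
    (hK : K ∩ S ⊆ closedNbhd G E)
    (hbig : ∀ C ∈ bigComponents G (S \ K), ∃ D ⊆ E, IsIsolatingIn G C D)
    (hpair : ∀ C ∈ pairComponents G (S \ K), ∃ z ∈ C, z ∈ closedNbhd G E) :
    IsIsolatingIn G S E := by
  refine ⟨hES, fun a ha b hb haE hbE hab => ?_⟩
  have haR : a ∈ S \ K := ⟨ha, fun h => haE (hK ⟨h, ha⟩)⟩
  have hbR : b ∈ S \ K := ⟨hb, fun h => hbE (hK ⟨h, hb⟩)⟩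
  set C := componentIn G (S \ K) a
  have hC : C ∈ components G (S \ K) := mem_components.mpr ⟨a, haR, rfl⟩
  have haC : a ∈ C := mem_componentIn_self haR
  have hbC : b ∈ C := mem_componentIn_of_adj haC hbR hab
  have h2 : 1 < C.ncard := (Set.one_lt_ncard_iff C.toFinite).mpr ⟨a, b, haC, hbC, hab.ne⟩
  rcases (by omega : C.ncard = 2 ∨ 3 ≤ C.ncard) with h | h
  · obtain ⟨z, hz, hzE⟩ := hpair C (Finset.mem_filter.mpr ⟨hC, h⟩)
    by_cases hza : z = a
    · exact haE (hza ▸ hzE)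
    by_cases hzb : z = b
    · exact hbE (hzb ▸ hzE)
    have : 2 < C.ncard := (Set.two_lt_ncard_iff C.toFinite).mpr
      ⟨a, b, z, haC, hbC, hz, hab.ne, Ne.symm hza, Ne.symm hzb⟩
    omega
  · obtain ⟨D, hDE, hD⟩ := hbig C (Finset.mem_filter.mpr ⟨hC, h⟩)
    exact hD.2 a haC b hbC (fun h => haE (closedNbhd_mono hDE h))
      (fun h => hbE (closedNbhd_mono hDE h)) hab

variable (G) in
noncomputable def isolBudget (R : Set V) : ℕ := ∑ C ∈ bigComponents G R, isolNumIn G C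

lemma three_mul_isolBudget_add_le {R : Set V}
    (hbound : ∀ C ∈ bigComponents G R, 3 * isolNumIn G C ≤ C.ncard) :
    3 * isolBudget G R + 2 * (pairComponents G R).card ≤ R.ncard := by
  rw [ncard_eq_sum_components (G := G) (R := R), isolBudget, bigComponents, pairComponents,
    Finset.sum_filter, Finset.card_filter, Finset.mul_sum, Finset.mul_sum,
    ← Finset.sum_add_distrib]
  refine Finset.sum_le_sum fun C hC => ?_
  by_cases h3 : 3 ≤ C.ncard
  · have := hbound C (Finset.mem_filter.mpr ⟨hC, h3⟩)
    simp only [h3, if_true]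
    split_ifs <;> omega
  · simp only [h3, if_false]
    split_ifs <;> omega

lemma three_mul_isolBudget_add_card_le {R : Set V}
    (hstrict : ∀ C ∈ bigComponents G R, 3 * isolNumIn G C < C.ncard) :
    3 * isolBudget G R + (components G R).card ≤ R.ncard := by
  rw [ncard_eq_sum_components (G := G) (R := R), isolBudget, bigComponents, Finset.sum_filter,
    Finset.card_eq_sum_ones, Finset.mul_sum, ← Finset.sum_add_distrib]
  refine Finset.sum_le_sum fun C hC => ?_
  have hpos := (nonempty_of_mem_components hC).ncard_pos
  by_cases h3 : 3 ≤ C.ncard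
  · have := hstrict C (Finset.mem_filter.mpr ⟨hC, h3⟩)
    simp only [h3, if_true]
    omega
  · simp only [h3, if_false]
    omega

lemma exists_isIsolatingIn_of_pairwise {S K X : Set V} (hKS : K ⊆ S) (hK : K.Pairwise G.Adj)
    (hXK : X ⊆ K) (hX : X.Nonempty)
    (hpair : ∀ C ∈ pairComponents G (S \ K), ∃ q ∈ X, ∃ z ∈ C, G.Adj q z) :
    ∃ E, IsIsolatingIn G S E ∧ X ⊆ E ∧ E.ncard ≤ X.ncard + isolBudget G (S \ K) := by
  obtain ⟨U, hUR, hUcard, hU⟩ := exists_isIsolatingIn_forall_mem (G := G) (bigComponents G (S \ K))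
  have hUS : U ⊆ S := hUR.trans <| Set.iUnion₂_subset fun C hC =>
    (subset_of_mem_components (Finset.mem_filter.mp hC).1).trans Set.sdiff_subset
  replace hUcard : U.ncard ≤ isolBudget G (S \ K) := hUcard
  obtain ⟨x, hx⟩ := hX
  refine ⟨X ∪ U, isIsolatingIn_of_components (K := K) (Set.union_subset (hXK.trans hKS) hUS)
    ?_ ?_ ?_, Set.subset_union_left, (Set.ncard_union_le X U).trans (by omega)⟩
  · rintro y ⟨hy, -⟩
    rcases eq_or_ne x y with rfl | hxy
    · exact mem_closedNbhd_of_mem (Or.inl hx)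
    · exact mem_closedNbhd_of_adj (Or.inl hx) (hK (hXK hx) hy hxy)
  · exact fun C hC => (hU C hC).imp fun D hD => ⟨hD.1.trans Set.subset_union_right, hD.2⟩
  · intro C hC
    obtain ⟨q, hq, z, hz, hqz⟩ := hpair C hC
    exact ⟨z, hz, mem_closedNbhd_of_adj (Or.inl hq) hqz⟩

lemma exists_isIsolatingIn_insert {S K : Set V} {x : V} (hKS : K ⊆ S) (hK : K.Pairwise G.Adj)
    (hx : x ∈ K) (hpair : ∀ C ∈ pairComponents G (S \ K), ∃ z ∈ C, G.Adj x z) :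
    ∃ E, IsIsolatingIn G S E ∧ x ∈ E ∧ E.ncard ≤ isolBudget G (S \ K) + 1 := by
  obtain ⟨E, hE, hxE, hcard⟩ := exists_isIsolatingIn_of_pairwise hKS hK
    (Set.singleton_subset_iff.mpr hx) (Set.singleton_nonempty x)
    (fun C hC => ⟨x, rfl, hpair C hC⟩)
  rw [Set.ncard_singleton] at hcard
  exact ⟨E, hE, hxE rfl, by omega⟩

/-- One attachment vertex per two-vertex component suffices, so the attachment set costs at
most `min |P| t` vertices, and `3 min |P| t ≤ |P| + 2 t`. -/
lemma exists_isIsolatingIn_of_adj_pairComponents {S K P : Set V} (hKS : K ⊆ S)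
    (hK : K.Pairwise G.Adj) (hPK : P ⊆ K) (hne : (pairComponents G (S \ K)).Nonempty)
    (hpair : ∀ C ∈ pairComponents G (S \ K), ∃ q ∈ P, ∃ z ∈ C, G.Adj q z) :
    ∃ E, IsIsolatingIn G S E ∧ 3 * E.ncard ≤
      P.ncard + 2 * (pairComponents G (S \ K)).card + 3 * isolBudget G (S \ K) := by
  obtain ⟨X, hXP, hXcard, hX⟩ := exists_subset_adj_of_forall hpair
  obtain ⟨C, hC⟩ := hne
  obtain ⟨q, hq, -⟩ := hX C hC
  obtain ⟨E, hE, -, hEcard⟩ := exists_isIsolatingIn_of_pairwise hKS hK (hXP.trans hPK) ⟨q, hq⟩ hX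
  have hXP' := Set.ncard_le_ncard hXP
  exact ⟨E, hE, by omega⟩

/-! ### The bound `3 ι(S) ≤ |S|` -/

variable (G) in
def IsolBounded (S : Set V) : Prop :=
  3 * isolNumIn G S ≤ S.ncard ∧ (S.ncard = 3 * isolNumIn G S →
    ∀ v ∈ S, ∃ E, IsIsolatingIn G S E ∧ v ∈ E ∧ E.ncard = isolNumIn G S)

section Induction

variable {S : Set V} (hS : ConnectedIn G S)
  (hIH : ∀ C ⊂ S, ConnectedIn G C → 3 ≤ C.ncard → IsolBounded G C)
include hS hIH

omit hS in
lemma isolBounded_of_mem_bigComponents {K C : Set V} (hK : (K ∩ S).Nonempty)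
    (hC : C ∈ bigComponents G (S \ K)) : IsolBounded G C := by
  obtain ⟨hC, h3⟩ := Finset.mem_filter.mp hC
  exact hIH C (ssubset_of_mem_components hK hC) (connectedIn_of_mem_components hC) h3

lemma exists_isIsolatingIn_of_tight_component {v : V} {C₀ : Set V} (hv : v ∈ S)
    (hpair : pairComponents G (S \ {v}) = ∅) (hC₀ : C₀ ∈ bigComponents G (S \ {v}))
    (htight : C₀.ncard = 3 * isolNumIn G C₀) :
    ∃ E, IsIsolatingIn G S E ∧ 3 * E.ncard ≤ (S \ {v}).ncard := by
  have hK : ({v} ∩ S).Nonempty := ⟨v, rfl, hv⟩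
  have hIB := fun {C} => isolBounded_of_mem_bigComponents hIH hK (C := C)
  obtain ⟨q, ⟨rfl, -⟩, z, hz, hqz⟩ :=
    exists_adj_of_mem_components hS hK (Finset.mem_filter.mp hC₀).1
  obtain ⟨E₀, hE₀, hzE₀, hE₀card⟩ := (hIB hC₀).2 htight z hz
  obtain ⟨U, hUR, hUcard, hU⟩ :=
    exists_isIsolatingIn_forall_mem (G := G) ((bigComponents G (S \ {q})).erase C₀)
  have hUS : U ⊆ S := hUR.trans <| Set.iUnion₂_subset fun C hC =>
    (subset_of_mem_components (Finset.mem_filter.mp (Finset.mem_of_mem_erase hC)).1).trans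
      Set.sdiff_subset
  have hE₀S : E₀ ⊆ S :=
    hE₀.1.trans ((subset_of_mem_components (Finset.mem_filter.mp hC₀).1).trans Set.sdiff_subset)
  refine ⟨E₀ ∪ U, isIsolatingIn_of_components (K := {q}) (Set.union_subset hE₀S hUS) ?_ ?_ ?_, ?_⟩
  · rintro x ⟨rfl, -⟩
    exact mem_closedNbhd_of_adj (Or.inl hzE₀) hqz.symm
  · intro C hC
    rcases eq_or_ne C C₀ with rfl | hCC₀
    · exact ⟨E₀, Set.subset_union_left, hE₀⟩
    · obtain ⟨D, hDU, hD⟩ := hU C (Finset.mem_erase.mpr ⟨hCC₀, hC⟩)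
      exact ⟨D, hDU.trans Set.subset_union_right, hD⟩
  · simp [hpair]
  · have hsum := Finset.add_sum_erase _ (isolNumIn G) hC₀
    have hbudget := three_mul_isolBudget_add_le (fun C hC => (hIB hC).1)
    rw [isolBudget, ← hsum] at hbudget
    have := Set.ncard_union_le E₀ U
    omega

lemma exists_isIsolatingIn_of_not_connectedIn_diff {v : V} (hv : v ∈ S) (h3 : 3 ≤ S.ncard)
    (hcut : ¬ ConnectedIn G (S \ {v})) : ∃ E, IsIsolatingIn G S E ∧ 3 * E.ncard ≤ S.ncard := by
  have hK : ({v} ∩ S).Nonempty := ⟨v, rfl, hv⟩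
  have hIB := fun {C} => isolBounded_of_mem_bigComponents hIH hK (C := C)
  have hR : (S \ {v}).ncard + 1 = S.ncard := Set.ncard_sdiff_singleton_add_one hv
  have hbudget := three_mul_isolBudget_add_le (fun C hC => (hIB hC).1)
  by_cases hroom : 3 * isolBudget G (S \ {v}) + 2 ≤ (S \ {v}).ncard
  · have hpair (C) (hC : C ∈ pairComponents G (S \ {v})) : ∃ z ∈ C, G.Adj v z := by
      obtain ⟨q, ⟨rfl, -⟩, hq⟩ := exists_adj_of_mem_components hS hK (Finset.mem_filter.mp hC).1
      exact hq
    obtain ⟨E, hE, -, hcard⟩ := exists_isIsolatingIn_insert (Set.singleton_subset_iff.mpr hv)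
      (Set.pairwise_singleton v G.Adj) rfl hpair
    exact ⟨E, hE, by omega⟩
  have hpair : pairComponents G (S \ {v}) = ∅ := Finset.card_eq_zero.mp (by omega)
  obtain ⟨C₀, hC₀, htight⟩ : ∃ C₀ ∈ bigComponents G (S \ {v}), C₀.ncard ≤ 3 * isolNumIn G C₀ := by
    by_contra! h
    have := three_mul_isolBudget_add_card_le h
    have := one_lt_card_components (Set.nonempty_of_ncard_ne_zero (by omega)) hcut
    omega
  obtain ⟨E, hE, hcard⟩ := exists_isIsolatingIn_of_tight_component hS hIH hv hpair hC₀
    (htight.antisymm (hIB hC₀).1)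
  exact ⟨E, hE, by omega⟩

lemma three_mul_isolNumIn_le (hbg : IsBlockGraph G) (h3 : 3 ≤ S.ncard) :
    3 * isolNumIn G S ≤ S.ncard := by
  by_cases hcut : ∃ v ∈ S, ¬ ConnectedIn G (S \ {v})
  · obtain ⟨v, hv, hcut⟩ := hcut
    obtain ⟨E, hE, hcard⟩ := exists_isIsolatingIn_of_not_connectedIn_diff hS hIH hv h3 hcut
    have := isolNumIn_le hE
    omega
  push Not at hcut
  have hK := hbg.pairwise_adj ⟨hS, hcut⟩
  obtain ⟨v, hv⟩ := hS.1
  have hE : IsIsolatingIn G S {v} := by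
    refine ⟨Set.singleton_subset_iff.mpr hv, fun a ha _ _ haE _ _ => haE ?_⟩
    rcases eq_or_ne v a with rfl | hva
    exacts [mem_closedNbhd_of_mem rfl, mem_closedNbhd_of_adj rfl (hK hv ha hva)]
  have := isolNumIn_le hE
  rw [Set.ncard_singleton] at this
  omega

lemma exists_isIsolatingIn_mem_ncard_eq (hbg : IsBlockGraph G)
    (htight : S.ncard = 3 * isolNumIn G S) {v : V} (hv : v ∈ S) :
    ∃ E, IsIsolatingIn G S E ∧ v ∈ E ∧ E.ncard = isolNumIn G S := by
  suffices ∃ K ⊆ S, v ∈ K ∧ K.Pairwise G.Adj ∧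
      ∀ C ∈ pairComponents G (S \ K), ∃ z ∈ C, G.Adj v z by
    obtain ⟨K, hKS, hvK, hK, hpair⟩ := this
    obtain ⟨E, hE, hvE, hcard⟩ := exists_isIsolatingIn_insert hKS hK hvK hpair
    have hbudget := three_mul_isolBudget_add_le
      (fun C hC => (isolBounded_of_mem_bigComponents hIH ⟨v, hvK, hv⟩ hC).1)
    have hSK := Set.ncard_sdiff_add_ncard_of_subset hKS
    have hK1 := (Set.ncard_pos K.toFinite).mpr ⟨v, hvK⟩
    have := isolNumIn_le hE
    -- `3 * isolBudget < |S|` and `3 ∣ |S|` force `3 * (isolBudget + 1) ≤ |S|`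
    exact ⟨E, hE, hvE, by omega⟩
  by_cases hcut : ConnectedIn G (S \ {v})
  swap
  · refine ⟨{v}, Set.singleton_subset_iff.mpr hv, rfl, Set.pairwise_singleton v G.Adj,
      fun C hC => ?_⟩
    obtain ⟨q, ⟨rfl, -⟩, hq⟩ := exists_adj_of_mem_components (K := {v}) hS ⟨v, rfl, hv⟩
      (Finset.mem_filter.mp hC).1
    exact hq
  set Q := insert v {u ∈ S | G.Adj v u}
  have hvQ : v ∈ Q := Set.mem_insert v _
  have hQS : Q ⊆ S := Set.insert_subset hv fun u hu => hu.1
  have hQ : Q.Pairwise G.Adj := by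
    have : Std.Symm G.Adj := ⟨fun _ _ h => h.symm⟩
    exact (Set.pairwise_insert_of_symm_of_notMem fun h => G.irrefl h.2).mpr
      ⟨fun a ha b hb hab => hbg.adj_of_connectedIn_diff hcut ha.1 hb.1 ha.2 hb.2 hab,
        fun b hb => hb.2⟩
  refine ⟨Q, hQS, hvQ, hQ, fun C hC => ?_⟩
  -- a two-vertex component hanging off `Q \ {v}` would beat the bound `|S| / 3`
  exfalso
  have hpair (C) (hC : C ∈ pairComponents G (S \ Q)) : ∃ q ∈ Q \ {v}, ∃ z ∈ C, G.Adj q z := by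
    have hC := (Finset.mem_filter.mp hC).1
    obtain ⟨q, ⟨hqQ, -⟩, z, hz, hqz⟩ := exists_adj_of_mem_components hS ⟨v, hvQ, hv⟩ hC
    refine ⟨q, ⟨hqQ, ?_⟩, z, hz, hqz⟩
    rintro rfl
    have hzR := subset_of_mem_components hC hz
    exact hzR.2 (Set.mem_insert_of_mem _ ⟨hzR.1, hqz⟩)
  obtain ⟨E, hE, hcard⟩ :=
    exists_isIsolatingIn_of_adj_pairComponents hQS hQ Set.sdiff_subset ⟨C, hC⟩ hpair
  have hbudget := three_mul_isolBudget_add_le (R := S \ Q)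
    (fun C hC => (isolBounded_of_mem_bigComponents hIH ⟨v, hvQ, hv⟩ hC).1)
  have hSQ := Set.ncard_sdiff_add_ncard_of_subset hQS
  have hQv := Set.ncard_sdiff_singleton_add_one hvQ
  have := isolNumIn_le hE
  omega

end Induction

theorem isolBounded_of_connectedIn (hbg : IsBlockGraph G) {S : Set V} (hS : ConnectedIn G S)
    (h3 : 3 ≤ S.ncard) : IsolBounded G S := by
  induction h : S.ncard using Nat.strong_induction_on generalizing S with
  | _ n ih =>
    have hIH (C) (hCS : C ⊂ S) (hC : ConnectedIn G C) (hC3 : 3 ≤ C.ncard) : IsolBounded G C :=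
      ih _ (h ▸ Set.ncard_lt_ncard hCS) hC hC3 rfl
    exact ⟨three_mul_isolNumIn_le hS hIH hbg h3,
      fun htight v hv => exists_isIsolatingIn_mem_ncard_eq hS hIH hbg htight hv⟩

lemma exists_isIsolating_three_mul_lt (hbg : IsBlockGraph G) (hne : G ≠ ⊤) {B : Set V}
    (hB : IsBlock G B) (hT : 2 < {v ∈ B | Simplicial G v}.ncard) :
    ∃ E, IsIsolating G E ∧ 3 * E.ncard < Nat.card V := by
  set T := {v ∈ B | Simplicial G v}
  have hK : B.Pairwise G.Adj := fun x hx y hy hxy => hbg.2 B hB x hx y hy hxy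
  have hTB : T ⊆ B := Set.sep_subset B _
  obtain ⟨s, hsT⟩ := Set.nonempty_of_ncard_ne_zero (s := T) (by omega)
  have hBS : (B ∩ Set.univ).Nonempty := ⟨s, hTB hsT, trivial⟩
  have hattach (C) (hC : C ∈ components G (Set.univ \ B)) : ∃ q ∈ B \ T, ∃ z ∈ C, G.Adj q z := by
    obtain ⟨q, ⟨hqB, -⟩, z, hz, hqz⟩ := exists_adj_of_mem_components (connectedIn_univ hbg.1) hBS hC
    refine ⟨q, ⟨hqB, fun hqT => ?_⟩, z, hz, hqz⟩
    exact (subset_of_mem_components hC hz).2 (hB.mem_of_adj_of_simplicial hK hqB hqT.2 hqz)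
  have hbudget := three_mul_isolBudget_add_le (G := G) (R := Set.univ \ B) fun C hC =>
    (isolBounded_of_connectedIn hbg (connectedIn_of_mem_components (Finset.mem_filter.mp hC).1)
      (Finset.mem_filter.mp hC).2).1
  have hRB := Set.ncard_sdiff_add_ncard_of_subset (Set.subset_univ B)
  rw [Set.ncard_univ] at hRB
  have hPT := Set.ncard_sdiff_add_ncard_of_subset hTB
  have hP : 1 ≤ (B \ T).ncard := by
    have hBne : B ≠ Set.univ := by
      rintro rfl
      exact hne (by ext x y; rw [top_adj]; exact ⟨G.ne_of_adj, fun h => hK trivial trivial h⟩)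
    obtain ⟨x, hx⟩ := (Set.ne_univ_iff_exists_notMem B).mp hBne
    obtain ⟨q, hq, -⟩ := hattach _ (mem_components.mpr ⟨x, ⟨trivial, hx⟩, rfl⟩)
    exact (Set.ncard_pos (B \ T).toFinite).mpr ⟨q, hq⟩
  rcases (pairComponents G (Set.univ \ B)).eq_empty_or_nonempty with h0 | h0
  · obtain ⟨E, hE, -, hcard⟩ := exists_isIsolatingIn_insert (Set.subset_univ B) hK (hTB hsT)
      (by simp [h0])
    exact ⟨E, isIsolatingIn_univ_iff.mp hE, by omega⟩
  · obtain ⟨E, hE, hcard⟩ := exists_isIsolatingIn_of_adj_pairComponents (Set.subset_univ B) hK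
      Set.sdiff_subset h0 fun C hC => hattach C (Finset.mem_filter.mp hC).1
    exact ⟨E, isIsolatingIn_univ_iff.mp hE, by omega⟩

end Finite

end BlockGraph

open BlockGraph in
theorem stmt5 {V : Type*} [Fintype V] (G : SimpleGraph V)
    (hbg : IsBlockGraph G) (hne : G ≠ ⊤)
    (hiso : 3 * isolNum G = Fintype.card V) :
    ∀ B : Set V, IsBlock G B → {v ∈ B | Simplicial G v}.ncard ≤ 2 := by
  intro B hB
  by_contra! hT
  obtain ⟨E, hE, hcard⟩ := exists_isIsolating_three_mul_lt hbg hne hB hT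
  have := isolNum_le hE
  rw [Nat.card_eq_fintype_card] at hcard
  omega
end

section
/- For the cycle C_n, the isolation number satisfies ι(C_n) = n/3 if and only if n ∈ {3, 6, 9}. -/
open SimpleGraph Set

lemma cycle_adj_iff {n : ℕ} (hn : 3 ≤ n) {u v : Fin n} :
    (SimpleGraph.cycleGraph n).Adj u v ↔
      (v.val = (u.val + 1) % n ∨ u.val = (v.val + 1) % n) := by
  obtain ⟨m, rfl⟩ : ∃ m, n = m + 2 := ⟨n - 2, by omega⟩
  rw [SimpleGraph.cycleGraph_adj, sub_eq_iff_eq_add, sub_eq_iff_eq_add,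
    Fin.ext_iff, Fin.ext_iff, Fin.val_add, Fin.val_add, Fin.val_one]
  simp only [Nat.add_comm 1]
  tauto

/-- The multiples-of-four set in `Fin n`, parametrized injectively. -/
def gfun (n : ℕ) : Fin ((n + 3) / 4) → Fin n :=
  fun i => ⟨4 * i.val, by have := i.isLt; omega⟩

lemma mem_range_gfun {n : ℕ} {a : Fin n} :
    a ∈ Set.range (gfun n) ↔ a.val % 4 = 0 := by
  constructor
  · rintro ⟨i, rfl⟩
    simp [gfun, Nat.mul_mod_right]
  · intro h
    exact ⟨⟨a.val / 4, by have := a.isLt; omega⟩, by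
      apply Fin.ext; simp [gfun]; omega⟩

lemma uncovered_char {n : ℕ} (hn : 3 ≤ n) {a : Fin n}
    (ha : a ∉ closedNbhd (SimpleGraph.cycleGraph n) (Set.range (gfun n))) :
    a.val % 4 = 2 ∧ a.val + 1 < n := by
  simp only [closedNbhd, Set.mem_setOf_eq, not_or, not_exists] at ha
  push_neg at ha
  obtain ⟨hmem, hadj⟩ := ha
  rw [mem_range_gfun] at hmem
  -- a is not the last vertex
  have hlast : a.val + 1 < n := by
    by_contra hcon
    have hav : a.val = n - 1 := by have := a.isLt; omega
    have h0 : (⟨0, by omega⟩ : Fin n) ∈ Set.range (gfun n) := by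
      rw [mem_range_gfun]; norm_num
    refine hadj _ h0 ?_
    rw [cycle_adj_iff hn]
    right
    show (0 : ℕ) = (a.val + 1) % n
    have e : a.val + 1 = n := by omega
    rw [e, Nat.mod_self]
  -- a.val % 4 ≠ 1
  have h1 : a.val % 4 ≠ 1 := by
    intro h
    have hpos : 1 ≤ a.val := by omega
    have hv : (⟨a.val - 1, by omega⟩ : Fin n) ∈ Set.range (gfun n) := by
      rw [mem_range_gfun]; simp; omega
    refine hadj _ hv ?_
    rw [cycle_adj_iff hn]
    left
    show a.val = (a.val - 1 + 1) % n
    have e : a.val - 1 + 1 = a.val := by omega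
    rw [e, Nat.mod_eq_of_lt a.isLt]
  -- a.val % 4 ≠ 3
  have h3 : a.val % 4 ≠ 3 := by
    intro h
    have hv : (⟨a.val + 1, hlast⟩ : Fin n) ∈ Set.range (gfun n) := by
      rw [mem_range_gfun]; simp; omega
    refine hadj _ hv ?_
    rw [cycle_adj_iff hn]
    right
    show a.val + 1 = (a.val + 1) % n
    rw [Nat.mod_eq_of_lt hlast]
  exact ⟨by omega, hlast⟩

lemma isol_upper (n : ℕ) (hn : 3 ≤ n) :
    isolNum (SimpleGraph.cycleGraph n) ≤ (n + 3) / 4 := by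
  have hinj : Function.Injective (gfun n) := by
    intro i j h
    apply Fin.ext
    have := congrArg Fin.val h
    simp only [gfun] at this
    omega
  have hiso : IsIsolating (SimpleGraph.cycleGraph n) (Set.range (gfun n)) := by
    intro a b ha hb hadj
    obtain ⟨ha2, ha1⟩ := uncovered_char hn ha
    obtain ⟨hb2, hb1⟩ := uncovered_char hn hb
    rw [cycle_adj_iff hn] at hadj
    rcases hadj with h | h <;> rw [Nat.mod_eq_of_lt (by omega)] at h <;> omega
  have hcard : (Set.range (gfun n)).ncard = (n + 3) / 4 := by
    rw [← Nat.card_coe_set_eq, Nat.card_range_of_injective hinj,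
      Nat.card_eq_fintype_card, Fintype.card_fin]
  exact Nat.sInf_le ⟨_, hiso, hcard⟩

/-- Finset version of the isolating condition, for deciding small cases. -/
def checkIso (n : ℕ) (F : Finset (Fin n)) : Prop :=
  ∀ a b : Fin n,
    (a ∉ F ∧ ∀ v ∈ F, ¬(SimpleGraph.cycleGraph n).Adj v a) →
    (b ∉ F ∧ ∀ v ∈ F, ¬(SimpleGraph.cycleGraph n).Adj v b) →
    ¬(SimpleGraph.cycleGraph n).Adj a b

instance (n : ℕ) (F : Finset (Fin n)) : Decidable (checkIso n F) := by
  unfold checkIso; infer_instance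

lemma isol_lower (n k : ℕ)
    (hd : ∀ F : Finset (Fin n), F.card < k → ¬ checkIso n F)
    {D : Set (Fin n)} (h : IsIsolating (SimpleGraph.cycleGraph n) D) :
    k ≤ D.ncard := by
  by_contra hlt
  push_neg at hlt
  have hfin : D.Finite := Set.toFinite D
  refine hd hfin.toFinset (by rwa [Set.ncard_eq_toFinset_card D hfin] at hlt) ?_
  intro a b ha hb
  apply h a b
  · simp only [closedNbhd, Set.mem_setOf_eq, not_or, not_exists]
    push_neg
    refine ⟨fun hm => ha.1 (hfin.mem_toFinset.2 hm), fun v hv => ha.2 v (hfin.mem_toFinset.2 hv)⟩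
  · simp only [closedNbhd, Set.mem_setOf_eq, not_or, not_exists]
    push_neg
    refine ⟨fun hm => hb.1 (hfin.mem_toFinset.2 hm), fun v hv => hb.2 v (hfin.mem_toFinset.2 hv)⟩

lemma isol_nonempty (n : ℕ) :
    {k | ∃ D : Set (Fin n), IsIsolating (SimpleGraph.cycleGraph n) D ∧ D.ncard = k}.Nonempty :=
  ⟨(Set.univ : Set (Fin n)).ncard, Set.univ, fun a _ ha _ _ => ha (Or.inl trivial), rfl⟩

lemma isol_eq (n k : ℕ) (hn : 3 ≤ n) (hk : (n + 3) / 4 = k)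
    (hd : ∀ F : Finset (Fin n), F.card < k → ¬ checkIso n F) :
    isolNum (SimpleGraph.cycleGraph n) = k := by
  refine le_antisymm (hk ▸ isol_upper n hn) (le_csInf (isol_nonempty n) ?_)
  rintro m ⟨D, hD, rfl⟩
  exact isol_lower n k hd hD

set_option maxRecDepth 100000 in
theorem stmt10 (n : ℕ) (hn : 3 ≤ n) :
    3 * isolNum (SimpleGraph.cycleGraph n) = n ↔ n = 3 ∨ n = 6 ∨ n = 9 := by
  constructor
  · intro h
    have hu := isol_upper n hn
    omega
  · rintro (rfl | rfl | rfl)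
    · rw [isol_eq 3 1 (by norm_num) (by norm_num) (by decide)]
    · rw [isol_eq 6 2 (by norm_num) (by norm_num) (by decide)]
    · rw [isol_eq 9 3 (by norm_num) (by norm_num) (by decide)]
end

section
/- Let G be obtained from a connected graph G_0 of order k by attaching at each vertex v of G_0 a disjoint copy of P_3, identifying v with a leaf of P_3. Then the order of G is n = 3k and ι(G) = n/3 = k. -/
open SimpleGraph Set

/-- The graph obtained from `G₀` by attaching a disjoint copy of `P₃` at every vertex `v`,
identifying `v = (v, 0)` with a leaf of the path `(v,0) – (v,1) – (v,2)`. -/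
def attachP3 {V₀ : Type*} (G₀ : SimpleGraph V₀) : SimpleGraph (V₀ × Fin 3) :=
  SimpleGraph.fromRel (fun p q =>
    (p.2 = 0 ∧ q.2 = 0 ∧ G₀.Adj p.1 q.1) ∨
    (p.1 = q.1 ∧ ((p.2 = 0 ∧ q.2 = 1) ∨ (p.2 = 1 ∧ q.2 = 2))))

theorem stmt12 {V₀ : Type*} [Fintype V₀] (G₀ : SimpleGraph V₀) (hconn : G₀.Connected) :
    Fintype.card (V₀ × Fin 3) = 3 * Fintype.card V₀ ∧
      isolNum (attachP3 G₀) = Fintype.card V₀ := by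
  constructor
  · simp [Fintype.card_prod, mul_comm]
  -- the canonical isolating set
  set D : Set (V₀ × Fin 3) := (fun v => (v, (1 : Fin 3))) '' Set.univ with hD
  have hDiso : IsIsolating (attachP3 G₀) D := by
    intro a b ha _ _
    exact ha (by
      obtain ⟨v, i⟩ := a
      fin_cases i
      · exact Or.inr ⟨(v, 1), ⟨v, trivial, rfl⟩, by
          simp [attachP3, SimpleGraph.fromRel_adj]⟩
      · exact Or.inl ⟨v, trivial, rfl⟩
      · exact Or.inr ⟨(v, 1), ⟨v, trivial, rfl⟩, by
          simp [attachP3, SimpleGraph.fromRel_adj]⟩)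
  have hDcard : D.ncard = Fintype.card V₀ := by
    rw [hD, Set.ncard_image_of_injective _ (fun a b h => (Prod.mk.injEq _ _ _ _ ▸ h).1),
      Set.ncard_univ, Nat.card_eq_fintype_card]
  have hmem : Fintype.card V₀ ∈ {k | ∃ D : Set (V₀ × Fin 3),
      IsIsolating (attachP3 G₀) D ∧ D.ncard = k} := ⟨D, hDiso, hDcard⟩
  refine le_antisymm (Nat.sInf_le hmem) (le_csInf ⟨_, hmem⟩ ?_)
  rintro m ⟨E, hEiso, rfl⟩
  -- every vertex of V₀ is the first coordinate of some element of E
  have hsurj : ∀ v : V₀, ∃ d ∈ E, d.1 = v := by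
    intro v
    by_contra h
    push_neg at h
    have key : ∀ i : Fin 3, (v, i) ∉ closedNbhd (attachP3 G₀) E ∨ i = 0 := by
      intro i
      rcases eq_or_ne i 0 with hi | hi
      · exact Or.inr hi
      refine Or.inl ?_
      rintro (hmem | ⟨d, hd, hadj⟩)
      · exact h _ hmem rfl
      · refine h _ hd ?_
        rw [attachP3, SimpleGraph.fromRel_adj] at hadj
        rcases hadj.2 with (⟨_, h2, _⟩ | ⟨h1, _⟩) | (⟨h2, _⟩ | ⟨h1, _⟩)
        · exact absurd h2 hi
        · exact h1
        · exact absurd h2 hi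
        · exact h1.symm
    have h1 := (key 1).resolve_right (by decide)
    have h2 := (key 2).resolve_right (by decide)
    exact hEiso _ _ h1 h2 (by
      rw [attachP3, SimpleGraph.fromRel_adj]
      exact ⟨by simp, Or.inl (Or.inr ⟨rfl, Or.inr ⟨rfl, rfl⟩⟩)⟩)
  have himg : Prod.fst '' E = Set.univ := by
    ext v
    simp only [Set.mem_image, Set.mem_univ, iff_true]
    obtain ⟨d, hd, hdv⟩ := hsurj v
    exact ⟨d, hd, hdv⟩
  calc Fintype.card V₀ = (Set.univ : Set V₀).ncard := by
        rw [Set.ncard_univ, Nat.card_eq_fintype_card]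
    _ = (Prod.fst '' E).ncard := by rw [himg]
    _ ≤ E.ncard := Set.ncard_image_le E.toFinite
end

section
/- Let G be a block graph with a diametral path P = (v_0, v_1, ..., v_d) with d ≥ 2, where a diametral path realizes the diameter of G. Then v_0 and v_d are simplicial vertices of G, and v_1, ..., v_{d-1} are cut vertices of G. -/
open SimpleGraph Set

/-! In a block graph every cycle lies in a block, which is a clique. Hence two neighbours of a
vertex `b` that remain connected after deleting `b` are adjacent. At an inner vertex `x` of a
diametral path, the two path-neighbours of `x` are at distance two, so deleting `x` must separate
them. At an end `u`, shortest paths from two neighbours of `u` to the other end avoid `u`, because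
`u` is farthest from that end; so the neighbours stay connected without `u` and are adjacent. -/

namespace SimpleGraph

variable {V : Type*} {G : SimpleGraph V}

lemma connected_induce_of_forall_walk {s : Set V} {u : V} (hu : u ∈ s)
    (h : ∀ v ∈ s, ∃ p : G.Walk u v, ∀ x ∈ p.support, x ∈ s) :
    (G.induce s).Connected := by
  rw [connected_iff_exists_forall_reachable]
  refine ⟨⟨u, hu⟩, fun ⟨v, hv⟩ => ?_⟩
  obtain ⟨p, hp⟩ := h v hv
  exact ⟨p.induce s hp⟩

lemma Walk.IsCycle.connected_induce_support_diff {b v : V} {c : G.Walk b b} (hc : c.IsCycle)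
    (hv : v ∈ c.support) : (G.induce ({x | x ∈ c.support} \ {v})).Connected := by
  classical
  -- Rotate the cycle to start at `v`; its tail is then a path ending at `v`.
  set d := c.rotate v hv
  have hd : d.tail.IsPath := (hc.rotate hv).isPath_tail
  have hmem : ∀ x, x ∈ d.tail.support → x ∈ c.support := fun x hx =>
    (c.mem_support_rotate_iff v hv).mp (List.mem_of_mem_tail (d.support_tail_of_not_nil
      (hc.rotate hv).not_nil ▸ hx))
  refine connected_induce_of_forall_walk ⟨hmem _ d.tail.start_mem_support,
    (d.adj_snd (hc.rotate hv).not_nil).ne'⟩ fun y ⟨hyc, hyv⟩ => ?_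
  have hy : y ∈ d.tail.support := by
    replace hyc : y ∈ c.support := hyc
    rw [← (c.mem_support_rotate_iff v hv), ← d.cons_support_tail (hc.rotate hv).not_nil] at hyc
    exact (List.mem_cons.mp hyc).resolve_left hyv
  refine ⟨d.tail.takeUntil y hy, fun x hx =>
    ⟨hmem x (d.tail.support_takeUntil_subset_support hy hx), ?_⟩⟩
  rintro rfl
  exact d.tail.endpoint_notMem_support_takeUntil hd hy (Ne.symm hyv) hx

lemma Walk.notMem_support_of_length_eq_dist {x u w : V} {q : G.Walk x w}
    (hq : q.length = G.dist x w) (hxu : x ≠ u) (hfar : G.dist x w ≤ G.dist u w) :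
    u ∉ q.support := fun hu => by
  classical
  have hxu' : 0 < G.dist x u := (Walk.reachable (q.takeUntil u hu)).pos_dist_of_ne hxu
  have htake := G.dist_le (q.takeUntil u hu)
  have hdrop := G.dist_le (q.dropUntil u hu)
  have hsplit := congrArg Walk.length (q.take_spec hu)
  rw [Walk.length_append] at hsplit
  omega

lemma Walk.two_le_dist_penultimate_snd (hG : G.Connected) {u x w : V}
    {q : G.Walk u x} {r : G.Walk x w} (hqr : (q.append r).length = G.dist u w)
    (hq : ¬ q.Nil) (hr : ¬ r.Nil) : 2 ≤ G.dist q.penultimate r.snd := by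
  have hq' := G.dist_le q.dropLast
  have hr' := G.dist_le r.tail
  have h1 := q.length_dropLast_add_one hq
  have h2 := r.length_tail_add_one hr
  have htri := (hG.dist_triangle (u := u) (v := q.penultimate) (w := w)).trans
    (Nat.add_le_add_left (hG.dist_triangle (v := r.snd)) _)
  rw [Walk.length_append] at hqr
  omega

end SimpleGraph

section

variable {V : Type*} {G : SimpleGraph V}

lemma not_isCutVertex_induce {s : Set V} {v : s} (h : (G.induce (s \ {(v : V)})).Connected) :
    ¬ IsCutVertex (G.induce s) v := by
  let f : G.induce (s \ {(v : V)}) →g (G.induce s).induce {w | w ≠ v} :=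
    ⟨fun x => ⟨⟨x, x.2.1⟩, fun hx => x.2.2 (congrArg Subtype.val hx)⟩, id⟩
  exact fun hv => hv.2 <| h.map f
    fun ⟨⟨x, hxs⟩, hxv⟩ => ⟨⟨x, hxs, fun hx => hxv (Subtype.ext hx)⟩, rfl⟩

lemma exists_isBlock_superset [Finite V] {s : Set V} (hconn : (G.induce s).Connected)
    (hcut : ∀ v, ¬ IsCutVertex (G.induce s) v) : ∃ B, IsBlock G B ∧ s ⊆ B := by
  obtain ⟨B, ⟨hsB, hB, hBcut⟩, hmax⟩ := Set.Finite.exists_maximalFor id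
    {B : Set V | s ⊆ B ∧ (G.induce B).Connected ∧ ∀ v, ¬ IsCutVertex (G.induce B) v}
    (Set.toFinite _) ⟨s, subset_rfl, hconn, hcut⟩
  exact ⟨B, ⟨hB, hBcut, fun B' hBB' hB' hB'cut =>
    (hmax ⟨hsB.trans hBB', hB', hB'cut⟩ hBB').antisymm hBB'⟩, hsB⟩

lemma IsBlockGraph.adj_of_mem_support_cycle [Finite V] (hG : IsBlockGraph G) {b x y : V}
    {c : G.Walk b b} (hc : c.IsCycle) (hx : x ∈ c.support) (hy : y ∈ c.support)
    (hxy : x ≠ y) : G.Adj x y := by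
  obtain ⟨B, hB, hcB⟩ := exists_isBlock_superset c.connected_induce_support
    fun v => not_isCutVertex_induce (hc.connected_induce_support_diff v.2)
  exact hG.2 B hB x (hcB hx) y (hcB hy) hxy

-- A path from `a` to `c` avoiding `b` closes up through `b` into a cycle.
lemma IsBlockGraph.adj_of_reachable_induce_ne [Finite V] (hG : IsBlockGraph G) {a b c : V}
    (hab : G.Adj a b) (hbc : G.Adj b c) (hac : a ≠ c)
    (hr : (G.induce {x | x ≠ b}).Reachable ⟨a, hab.ne⟩ ⟨c, hbc.ne'⟩) : G.Adj a c := by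
  classical
  obtain ⟨q, hq⟩ := hr.some.toPath
  set p : G.Walk a c := q.map (Embedding.induce {x | x ≠ b}).toHom
  have hp : p.IsPath := hq.map Subtype.val_injective
  have hbp : b ∉ p.support := fun hb => by
    obtain ⟨x, -, hx⟩ := List.mem_map.mp (q.support_map _ ▸ hb)
    exact x.2 hx
  have hcyc : (Walk.cons hab.symm (p.concat hbc.symm)).IsCycle := by
    refine (Walk.cons_isCycle_iff _ _).mpr ⟨?_, fun he => ?_⟩
    · rw [← Walk.isPath_reverse_iff, Walk.reverse_concat]
      exact hp.reverse.cons (by simpa using hbp)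
    · rw [Walk.edges_concat, List.concat_eq_append, List.mem_append, List.mem_singleton] at he
      rcases he with he | he
      · exact hbp (p.fst_mem_support_of_mem_edges he)
      · rcases Sym2.eq_iff.mp he with ⟨h, -⟩ | ⟨-, h⟩
        exacts [hbc.ne h, hac h]
  exact hG.adj_of_mem_support_cycle hcyc (by simp) (by simp) hac

lemma IsBlockGraph.simplicial_of_forall_dist_le [Finite V] (hG : IsBlockGraph G) {u w : V}
    (hfar : ∀ x, G.dist x w ≤ G.dist u w) : Simplicial G u := by
  intro x (hx : G.Adj u x) y (hy : G.Adj u y) hxy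
  obtain ⟨q, -, hq⟩ := hG.1.exists_path_of_dist x w
  obtain ⟨r, -, hr⟩ := hG.1.exists_path_of_dist y w
  have hqu := Walk.notMem_support_of_length_eq_dist hq hx.ne' (hfar x)
  have hru := Walk.notMem_support_of_length_eq_dist hr hy.ne' (hfar y)
  refine hG.adj_of_reachable_induce_ne hx.symm hy hxy ⟨(q.append r.reverse).induce _ ?_⟩
  intro z hz
  rw [Walk.mem_support_append_iff, Walk.support_reverse, List.mem_reverse] at hz
  rintro rfl
  exact hz.elim hqu hru

lemma IsBlockGraph.isCutVertex_of_mem_support [Finite V] (hG : IsBlockGraph G) {u w x : V}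
    {p : G.Walk u w} (hp : p.length = G.dist u w) (hx : x ∈ p.support) (hxu : x ≠ u)
    (hxw : x ≠ w) : IsCutVertex G x := by
  classical
  set q := p.takeUntil x hx
  set r := p.dropUntil x hx
  have hq : ¬ q.Nil := Walk.not_nil_of_ne hxu.symm
  have hr : ¬ r.Nil := Walk.not_nil_of_ne hxw
  have hdist := Walk.two_le_dist_penultimate_snd hG.1 (p.take_spec hx ▸ hp) hq hr
  refine ⟨hG.1, fun hconn => ?_⟩
  have hac : G.Adj q.penultimate r.snd := hG.adj_of_reachable_induce_ne (q.adj_penultimate hq)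
    (r.adj_snd hr) (fun h => by rw [h, SimpleGraph.dist_self] at hdist; omega)
    (hconn.preconnected _ _)
  rw [dist_eq_one_iff_adj.mpr hac] at hdist
  omega

end

theorem stmt16_general {V : Type*} [Fintype V] (G : SimpleGraph V) (hbg : IsBlockGraph G)
    (u w : V) (p : G.Walk u w) (hlen : p.length = G.dist u w)
    (hdiam : ∀ x y : V, G.dist x y ≤ G.dist u w) :
    Simplicial G u ∧ Simplicial G w ∧
      ∀ x ∈ p.support, x ≠ u → x ≠ w → IsCutVertex G x :=
  ⟨hbg.simplicial_of_forall_dist_le fun x => hdiam x w,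
    hbg.simplicial_of_forall_dist_le fun x => G.dist_comm (u := w) ▸ hdiam x u,
    fun _ hx hxu hxw => hbg.isCutVertex_of_mem_support hlen hx hxu hxw⟩

theorem stmt16 {V : Type*} [Fintype V] (G : SimpleGraph V) (hbg : IsBlockGraph G)
    (u w : V) (p : G.Walk u w) (hp : p.IsPath) (hlen : p.length = G.dist u w)
    (hdiam : ∀ x y : V, G.dist x y ≤ G.dist u w) (hd : 2 ≤ p.length) :
    Simplicial G u ∧ Simplicial G w ∧
      ∀ x ∈ p.support, x ≠ u → x ≠ w → IsCutVertex G x :=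
  stmt16_general G hbg u w p hlen hdiam
end
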